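/- There is no continuous map f : S² → ℂ^{2m} such that ω(f(z), f(-z)) ≠ 0 for all z ∈ S², where ω is the standard symplectic form on ℂ^{2m}. -/

import Mathlib

open Matrix

/-- The standard symplectic matrix `Ω_m = [[0, Iₘ],[-Iₘ, 0]]`. -/
def standardSymplecticMatrix (𝕂 : Type*) [RCLike 𝕂] (m : ℕ) :
    Matrix (Fin (2 * m)) (Fin (2 * m)) 𝕂 :=
  fun i j => if (j : ℕ) = (i : ℕ) + m then 1 else if (i : ℕ) = (j : ℕ) + m then -1 else 0

/-- The standard symplectic form `ω(u,v) = uᵀ Ω_m v` on `𝕂^{2m}`. -/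
def standardSymplecticForm (𝕂 : Type*) [RCLike 𝕂] (m : ℕ)
    (u v : Fin (2 * m) → 𝕂) : 𝕂 :=
  u ⬝ᵥ (standardSymplecticMatrix 𝕂 m *ᵥ v)

/-!
An odd continuous map `g : S² → ℂ` must vanish. Otherwise, pulled back along spherical
coordinates to the simply connected plane, `g` has a continuous logarithm `L`. As `g` is
constant at the pole and `2π`-periodic in the azimuth, so is `L`; on the equator, oddness of `g`
makes `L (φ + π) - L φ` a constant `c` with `exp c = -1`, yet `2c = L (φ + 2π) - L φ = 0`.
The map `z ↦ ω (f z) (f (-z))` is odd because `ω` is antisymmetric.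
-/

open Real

section Symplectic

variable {𝕂 : Type*} [RCLike 𝕂] (m : ℕ)

theorem standardSymplecticMatrix_transpose :
    (standardSymplecticMatrix 𝕂 m)ᵀ = -standardSymplecticMatrix 𝕂 m := by
  ext i j
  have hi := i.isLt
  rw [transpose_apply, Matrix.neg_apply]
  simp only [standardSymplecticMatrix]
  split_ifs <;> first | simp | omega

theorem standardSymplecticForm_swap (u v : Fin (2 * m) → 𝕂) :
    standardSymplecticForm 𝕂 m v u = -standardSymplecticForm 𝕂 m u v := by
  rw [standardSymplecticForm, standardSymplecticForm, dotProduct_mulVec, ← mulVec_transpose,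
    standardSymplecticMatrix_transpose, neg_mulVec, neg_dotProduct, dotProduct_comm]

theorem Continuous.standardSymplecticForm {X : Type*} [TopologicalSpace X]
    {u v : X → Fin (2 * m) → 𝕂} (hu : Continuous u) (hv : Continuous v) :
    Continuous fun x => standardSymplecticForm 𝕂 m (u x) (v x) :=
  hu.dotProduct (continuous_const.matrix_mulVec hv)

end Symplectic

namespace Complex

theorem exists_continuous_exp_comp_eq {A : Type*} [TopologicalSpace A] [SimplyConnectedSpace A]
    [LocallyPathConnectedSpace A] {F : A → ℂ} (hF : Continuous F) (hF₀ : ∀ a, F a ≠ 0) :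
    ∃ L : A → ℂ, Continuous L ∧ ∀ a, exp (L a) = F a := by
  obtain ⟨a₀⟩ : Nonempty A := inferInstance
  obtain ⟨L, ⟨-, hL⟩, -⟩ := isCoveringMap_exp.existsUnique_continuousMap_lifts
    ⟨fun a => ⟨F a, hF₀ a⟩, by fun_prop⟩ a₀ (log (F a₀)) (Subtype.ext (exp_log (hF₀ a₀)))
  exact ⟨L, L.continuous, fun a => congr_arg Subtype.val (congr_fun hL a)⟩

theorem eq_of_continuous_of_exp_eq {A : Type*} [TopologicalSpace A] [PreconnectedSpace A]
    {h : A → ℂ} (hc : Continuous h) (hexp : ∀ a b, exp (h a) = exp (h b)) (a b : A) :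
    h a = h b :=
  isCoveringMap_exp.isSeparatedMap.const_of_comp
    isCoveringMap_exp.isLocalHomeomorph.isLocallyInjective hc
    (fun a b => Subtype.ext (hexp a b)) a b

end Complex

theorem exists_eq_zero_of_antiperiodic_on_equator {F : ℝ × ℝ → ℂ} (hF : Continuous F)
    (hpole : ∀ φ, F (φ, 0) = F (0, 0)) (hper : ∀ θ, F (2 * π, θ) = F (0, θ))
    (hodd : Function.Antiperiodic (fun φ => F (φ, π / 2)) π) : ∃ p, F p = 0 := by
  replace hodd (φ : ℝ) : F (φ + π, π / 2) = -F (φ, π / 2) := hodd φ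
  by_contra! hF₀
  obtain ⟨L, hLc, hL⟩ := Complex.exists_continuous_exp_comp_eq hF hF₀
  have exp_L_sub (p q : ℝ × ℝ) : Complex.exp (L p - L q) = F p / F q := by
    rw [Complex.exp_sub, hL, hL]
  have L_pole (φ : ℝ) : L (φ, 0) = L (0, 0) :=
    Complex.eq_of_continuous_of_exp_eq (h := fun φ => L (φ, 0)) (by fun_prop)
      (fun a b => by simp only [hL, hpole]) φ 0
  -- the winding number of `θ`-circles is constant in `θ` and vanishes at the pole
  have winding_zero (θ : ℝ) : L (2 * π, θ) - L (0, θ) = 0 := by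
    have := Complex.eq_of_continuous_of_exp_eq (h := fun θ => L (2 * π, θ) - L (0, θ))
      (by fun_prop) (fun a b => by simp only [exp_L_sub, hper, div_self (hF₀ _)]) θ 0
    rw [this, L_pole, sub_self]
  have L_odd (φ : ℝ) : L (φ + π, π / 2) - L (φ, π / 2) = L (π, π / 2) - L (0, π / 2) := by
    have := Complex.eq_of_continuous_of_exp_eq (h := fun φ => L (φ + π, π / 2) - L (φ, π / 2))
      (by fun_prop) (fun a b => by simp only [exp_L_sub, hodd, neg_div, div_self (hF₀ _)]) φ 0
    simpa only [zero_add] using this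
  have half_turn_zero : L (π, π / 2) - L (0, π / 2) = 0 := by
    have h := L_odd π
    rw [← two_mul] at h
    linear_combination (-1 / 2 : ℂ) * (h - winding_zero (π / 2))
  have h := exp_L_sub (0 + π, π / 2) (0, π / 2)
  rw [hodd, neg_div, div_self (hF₀ _), zero_add, half_turn_zero, Complex.exp_zero] at h
  norm_num at h

noncomputable def sphericalPoint (φ θ : ℝ) : Metric.sphere (0 : EuclideanSpace ℝ (Fin 3)) 1 :=
  ⟨!₂[sin θ * cos φ, sin θ * sin φ, cos θ], by
    rw [mem_sphere_zero_iff_norm, EuclideanSpace.norm_eq, Fin.sum_univ_three, Real.sqrt_eq_one]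
    simp only [Real.norm_eq_abs, sq_abs, Fin.isValue, cons_val_zero, cons_val_one, cons_val]
    nlinarith [sin_sq_add_cos_sq θ, sin_sq_add_cos_sq φ]⟩

theorem continuous_sphericalPoint : Continuous fun p : ℝ × ℝ => sphericalPoint p.1 p.2 := by
  unfold sphericalPoint
  fun_prop

theorem sphericalPoint_zero (φ : ℝ) : sphericalPoint φ 0 = sphericalPoint 0 0 := by
  simp [sphericalPoint]

theorem sphericalPoint_two_pi (θ : ℝ) : sphericalPoint (2 * π) θ = sphericalPoint 0 θ := by
  simp [sphericalPoint]

theorem sphericalPoint_add_pi_pi_div_two (φ : ℝ) :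
    sphericalPoint (φ + π) (π / 2) = -sphericalPoint φ (π / 2) := by
  ext i
  fin_cases i <;> simp [sphericalPoint, cos_add_pi, sin_add_pi]

theorem exists_eq_zero_of_continuous_of_odd_sphere
    {g : Metric.sphere (0 : EuclideanSpace ℝ (Fin 3)) 1 → ℂ} (hg : Continuous g)
    (hodd : ∀ z, g (-z) = -g z) : ∃ z, g z = 0 := by
  obtain ⟨p, hp⟩ := exists_eq_zero_of_antiperiodic_on_equator
    (F := fun p => g (sphericalPoint p.1 p.2)) (hg.comp continuous_sphericalPoint)
    (fun φ => by rw [sphericalPoint_zero]) (fun θ => by rw [sphericalPoint_two_pi])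
    (fun φ => by dsimp only; rw [sphericalPoint_add_pi_pi_div_two, hodd])
  exact ⟨_, hp⟩

/-- There is no continuous map `f : S² → ℂ^{2m}` with `ω(f z, f (-z)) ≠ 0` for all `z`,
where `ω` is the standard symplectic form on `ℂ^{2m}`. -/
theorem no_continuous_symplectically_antipodal_sphere2 (m : ℕ) :
    ¬ ∃ f : Metric.sphere (0 : EuclideanSpace ℝ (Fin 3)) 1 → (Fin (2 * m) → ℂ),
      Continuous f ∧ ∀ z, standardSymplecticForm ℂ m (f z) (f (-z)) ≠ 0 := by
  rintro ⟨f, hf, hω⟩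
  obtain ⟨z, hz⟩ := exists_eq_zero_of_continuous_of_odd_sphere
    (g := fun z => standardSymplecticForm ℂ m (f z) (f (-z)))
    (hf.standardSymplecticForm m (hf.comp continuous_neg))
    (fun z => by rw [neg_neg, standardSymplecticForm_swap])
  exact hω z hz
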